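/- Let Q be a rack and N ∈ Norm(Q), i.e., a subgroup of Dis(Q) normal in LMlt(Q). Then Dis_{con_N} ≤ N ≤ Dis^{con_N}, and con_N = 1_Q (the full relation) if and only if N = Dis(Q). -/

import Mathlib

structure LeftQuasigroup (Q : Type*) where
  op : Q → Q → Q
  dv : Q → Q → Q
  dv_op : ∀ x y, dv x (op x y) = y
  op_dv : ∀ x y, op x (dv x y) = y

namespace LeftQuasigroup

variable {Q : Type*} (S : LeftQuasigroup Q)

/-- The left translation by `a`, as a permutation of `Q`. -/
def L (a : Q) : Equiv.Perm Q :=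
  ⟨S.op a, S.dv a, S.dv_op a, S.op_dv a⟩

/-- The left multiplication group. -/
def LMlt : Subgroup (Equiv.Perm Q) :=
  Subgroup.closure (Set.range S.L)

/-- The displacement group. -/
def Dis : Subgroup (Equiv.Perm Q) :=
  Subgroup.closure { f | ∃ a b, f = S.L a * (S.L b)⁻¹ }

/-- `α` is a congruence of the left quasigroup. -/
def IsCongruence (α : Q → Q → Prop) : Prop :=
  Equivalence α ∧
  (∀ a b c d, α a b → α c d → α (S.op a c) (S.op b d)) ∧
  (∀ a b c d, α a b → α c d → α (S.dv a c) (S.dv b d))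

/-- The displacement group relative to `α`: the smallest normal subgroup of
`LMlt` containing all `L a * (L b)⁻¹` with `α a b`, given explicitly as the
subgroup generated by the `LMlt`-conjugates of such elements. -/
def DisRel (α : Q → Q → Prop) : Subgroup (Equiv.Perm Q) :=
  Subgroup.closure
    { f | ∃ g ∈ S.LMlt, ∃ a b, α a b ∧ f = g * (S.L a * (S.L b)⁻¹) * g⁻¹ }

/-- The set `Dis^α = {h ∈ Dis(Q) : h(a) α a for all a}`. -/
def DisUpSet (α : Q → Q → Prop) : Set (Equiv.Perm Q) :=
  { h | h ∈ S.Dis ∧ ∀ a, α (h a) a }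

/-- Left self-distributivity, making a left quasigroup a rack. -/
def IsRack : Prop :=
  ∀ x y z, S.op x (S.op y z) = S.op (S.op x y) (S.op x z)

end LeftQuasigroup

open LeftQuasigroup

/-! In a rack every element `h` of `LMlt(Q)` is an automorphism, so `h L_a h⁻¹ = L_{h a}`.
Hence for `h ∈ N` the displacement `L_{h a} L_a⁻¹ = h · (L_a h⁻¹ L_a⁻¹)` lies in `N`, which is
`N ≤ Dis^{con_N}`. The other two claims are formal: `Dis_{con_N}` is generated by
`LMlt`-conjugates of elements of `N`, and `con_N` is full iff `N` contains the generators
`L_a L_b⁻¹` of `Dis(Q)`. -/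

namespace LeftQuasigroup

variable {Q : Type*} (S : LeftQuasigroup Q)

theorem L_mem_LMlt (a : Q) : S.L a ∈ S.LMlt :=
  Subgroup.subset_closure ⟨a, rfl⟩

theorem L_mul_inv_mem_Dis (a b : Q) : S.L a * (S.L b)⁻¹ ∈ S.Dis :=
  Subgroup.subset_closure ⟨a, b, rfl⟩

theorem Dis_le_LMlt : S.Dis ≤ S.LMlt :=
  (Subgroup.closure_le _).2 <| by
    rintro f ⟨a, b, rfl⟩
    exact mul_mem (S.L_mem_LMlt a) (inv_mem (S.L_mem_LMlt b))

theorem Dis_le_iff {N : Subgroup (Equiv.Perm Q)} :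
    S.Dis ≤ N ↔ ∀ a b, S.L a * (S.L b)⁻¹ ∈ N := by
  refine ⟨fun h a b => h (S.L_mul_inv_mem_Dis a b), fun h => (Subgroup.closure_le _).2 ?_⟩
  rintro f ⟨a, b, rfl⟩
  exact h a b

theorem DisRel_le_of_conj_mem {α : Q → Q → Prop} {N : Subgroup (Equiv.Perm Q)}
    (hα : ∀ a b, α a b → S.L a * (S.L b)⁻¹ ∈ N)
    (hN : ∀ g ∈ S.LMlt, ∀ n ∈ N, g * n * g⁻¹ ∈ N) : S.DisRel α ≤ N :=
  (Subgroup.closure_le _).2 <| by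
    rintro f ⟨g, hg, a, b, hab, rfl⟩
    exact hN g hg _ (hα a b hab)

namespace IsRack

variable {S}

theorem L_mul_L (hS : S.IsRack) (x a : Q) : S.L x * S.L a = S.L (S.L x a) * S.L x := by
  ext b
  exact hS x a b

theorem mul_L_of_mem_LMlt (hS : S.IsRack) {h : Equiv.Perm Q} (hh : h ∈ S.LMlt) (a : Q) :
    h * S.L a = S.L (h a) * h := by
  induction hh using Subgroup.closure_induction generalizing a with
  | mem f hf =>
    obtain ⟨x, rfl⟩ := hf
    exact hS.L_mul_L x a
  | one => simp
  | mul f g _ _ hf hg =>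
    rw [mul_assoc, hg, ← mul_assoc, hf, mul_assoc, Equiv.Perm.mul_apply]
  | inv f _ hf =>
    have := hf (f⁻¹ a)
    rw [← Equiv.Perm.mul_apply, mul_inv_cancel, Equiv.Perm.one_apply] at this
    rw [eq_mul_inv_iff_mul_eq, mul_assoc, ← this, inv_mul_cancel_left]

theorem L_apply_mul_inv_mem (hS : S.IsRack) {N : Subgroup (Equiv.Perm Q)} (hNL : N ≤ S.LMlt)
    (hN : ∀ g ∈ S.LMlt, ∀ n ∈ N, g * n * g⁻¹ ∈ N) {h : Equiv.Perm Q} (hh : h ∈ N) (a : Q) :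
    S.L (h a) * (S.L a)⁻¹ ∈ N := by
  have hconj : S.L (h a) * (S.L a)⁻¹ = h * (S.L a * h⁻¹ * (S.L a)⁻¹) := by
    rw [← mul_inv_eq_of_eq_mul (hS.mul_L_of_mem_LMlt (hNL hh) a)]
    group
  rw [hconj]
  exact mul_mem hh (hN (S.L a) (S.L_mem_LMlt a) _ (inv_mem hh))

end IsRack

end LeftQuasigroup

/-- `Dis_{con_N} ≤ N ≤ Dis^{con_N}`, and `con_N` is the full relation iff
`N = Dis(Q)`. -/
theorem stmt_12 {Q : Type*} (S : LeftQuasigroup Q) (hSD : S.IsRack)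
    (N : Subgroup (Equiv.Perm Q)) (hN1 : N ≤ S.Dis)
    (hN2 : ∀ g ∈ S.LMlt, ∀ n ∈ N, g * n * g⁻¹ ∈ N) :
    S.DisRel (fun a b => S.L a * (S.L b)⁻¹ ∈ N) ≤ N ∧
    (N : Set (Equiv.Perm Q)) ⊆
      S.DisUpSet (fun a b => S.L a * (S.L b)⁻¹ ∈ N) ∧
    ((∀ a b : Q, S.L a * (S.L b)⁻¹ ∈ N) ↔ N = S.Dis) := by
  refine ⟨S.DisRel_le_of_conj_mem (fun _ _ hab => hab) hN2,
    fun h hh => ⟨hN1 hh, IsRack.L_apply_mul_inv_mem hSD (hN1.trans S.Dis_le_LMlt) hN2 hh⟩, ?_⟩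
  rw [← S.Dis_le_iff]
  exact ⟨fun h => le_antisymm hN1 h, fun h => h.ge⟩
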